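/- In the Baumslag group G_(1,2), set t = b a b⁻¹ and define recursively T(0) = t and T(n+1) = b · T(n) · a · T(n)⁻¹ · b⁻¹. Then for every n ∈ ℕ, T(n) = t^{tow(n)} in G_(1,2). -/

import Mathlib

/-- The single relator `(b a b⁻¹) a (b a b⁻¹)⁻¹ a⁻²` of the Baumslag group G_(1,2),
with `a` the generator of index `0` and `b` the generator of index `1`. -/
def baumRels : Set (FreeGroup (Fin 2)) :=
  {(FreeGroup.of 1 * FreeGroup.of 0 * (FreeGroup.of 1)⁻¹) * FreeGroup.of 0 *
      (FreeGroup.of 1 * FreeGroup.of 0 * (FreeGroup.of 1)⁻¹)⁻¹ *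
      (FreeGroup.of 0 * FreeGroup.of 0)⁻¹}

/-- The Baumslag group G_(1,2) = ⟨a, b ∣ (b a b⁻¹) a (b a b⁻¹)⁻¹ = a²⟩. -/
abbrev Baumslag : Type := PresentedGroup baumRels

/-- The generator `a` of the Baumslag group. -/
def bgA : Baumslag := PresentedGroup.of 0

/-- The generator `b` of the Baumslag group. -/
def bgB : Baumslag := PresentedGroup.of 1

/-- The element `t = b a b⁻¹` of the Baumslag group. -/
def bgT : Baumslag := bgB * bgA * bgB⁻¹

/-- The tower function: tow(0) = 1, tow(i+1) = 2^tow(i). -/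
def tow : ℕ → ℕ
  | 0 => 1
  | n + 1 => 2 ^ tow n

/-- The sequence T(0) = t, T(n+1) = b·T(n)·a·T(n)⁻¹·b⁻¹ in the Baumslag group. -/
def Tseq : ℕ → Baumslag
  | 0 => bgT
  | n + 1 => bgB * Tseq n * bgA * (Tseq n)⁻¹ * bgB⁻¹

/-!
Since `t a t⁻¹ = a²`, conjugating `a` by `t^k` gives `a^(2^k)`. Hence if `T(n) = t^m` then
`T(n+1) = b a^(2^m) b⁻¹ = (b a b⁻¹)^(2^m) = t^(2^m)`, which is the recursion of `tow`.
-/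

theorem pow_mul_mul_inv_pow_of_mul_mul_inv_eq_sq {G : Type*} [Group G] {t a : G}
    (h : t * a * t⁻¹ = a ^ 2) (k : ℕ) : t ^ k * a * (t ^ k)⁻¹ = a ^ 2 ^ k := by
  induction k with
  | zero => simp
  | succ k ih =>
    calc t ^ (k + 1) * a * (t ^ (k + 1))⁻¹ = t * (t ^ k * a * (t ^ k)⁻¹) * t⁻¹ := by group
      _ = (t * a * t⁻¹) ^ 2 ^ k := by rw [ih, conj_pow]
      _ = a ^ 2 ^ (k + 1) := by rw [h, ← pow_mul, pow_succ']

theorem bgT_mul_bgA_mul_inv : bgT * bgA * bgT⁻¹ = bgA ^ 2 := by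
  rw [pow_two]
  exact PresentedGroup.mk_eq_mk_of_mul_inv_mem rfl

/-- In the Baumslag group, `T(n) = t^{tow(n)}` for every `n`. -/
theorem Tseq_eq_pow_tow (n : ℕ) : Tseq n = bgT ^ tow n := by
  induction n with
  | zero => exact (pow_one bgT).symm
  | succ n ih =>
    calc Tseq (n + 1) = bgB * (bgT ^ tow n * bgA * (bgT ^ tow n)⁻¹) * bgB⁻¹ := by
          rw [Tseq, ih]; group
      _ = (bgB * bgA * bgB⁻¹) ^ 2 ^ tow n := by
          rw [pow_mul_mul_inv_pow_of_mul_mul_inv_eq_sq bgT_mul_bgA_mul_inv, conj_pow]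
      _ = bgT ^ tow (n + 1) := rfl
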